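/- arXiv:2310.12139 — 8 statements merged into one kernel-verified Lean document; each statement's English description precedes it below -/
import Mathlib

section
/- If f: ℝⁿ → ℝ is convex and differentiable, σ_{s-1} < σ_s, x_{s-1}^* minimizes f(x) + (σ_{s-1}/2)‖x - x̄_{s-1}‖², and x_s^* minimizes f(x) + (σ_{s-1}/2)‖x - x̄_{s-1}‖² + ((σ_s - σ_{s-1})/2)‖x - x_{s-1}‖², then ‖x_{s-1} - x_s^*‖ ≤ ‖x_{s-1} - x_{s-1}^*‖. -/
open RealInnerProductSpace

theorem stmt_0 {n : ℕ} (f : EuclideanSpace ℝ (Fin n) → ℝ)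
    (hf : ConvexOn ℝ Set.univ f) (hdiff : Differentiable ℝ f)
    (σ' σ : ℝ) (hσ'0 : 0 ≤ σ') (hσ : σ' < σ)
    (xb xprev xs1 xs : EuclideanSpace ℝ (Fin n))
    (hmin1 : ∀ y, f xs1 + σ' / 2 * ‖xs1 - xb‖ ^ 2 ≤ f y + σ' / 2 * ‖y - xb‖ ^ 2)
    (hmin2 : ∀ y, f xs + σ' / 2 * ‖xs - xb‖ ^ 2 + (σ - σ') / 2 * ‖xs - xprev‖ ^ 2 ≤
      f y + σ' / 2 * ‖y - xb‖ ^ 2 + (σ - σ') / 2 * ‖y - xprev‖ ^ 2) :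
    ‖xprev - xs‖ ≤ ‖xprev - xs1‖ := by
  have h1 := hmin1 xs
  have h2 := hmin2 xs1
  have hc : 0 < σ - σ' := by linarith
  have hsq : ‖xs - xprev‖ ^ 2 ≤ ‖xs1 - xprev‖ ^ 2 := by nlinarith
  rw [norm_sub_rev xprev xs, norm_sub_rev xprev xs1]
  nlinarith [norm_nonneg (xs - xprev), norm_nonneg (xs1 - xprev)]
end

section
/- Let X ⊆ ℝⁿ be closed convex, f convex differentiable, φ convex. For η > 0, σ ≥ 0, x, x̄ ∈ ℝⁿ, let x⁺ := argmin_{u∈X} ⟨∇f(x), u⟩ + φ(u) + ((η+σ)/2)‖u - x‖² and x⁺⁺ := argmin_{u∈X} ⟨∇f(x), u⟩ + φ(u) + (σ/2)‖u - x̄‖² + (η/2)‖u - x‖². Then ‖x⁺ - x⁺⁺‖ ≤ (σ/(η+σ))‖x - x̄‖. -/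
open scoped RealInnerProductSpace

open Filter Topology

/-!
Put `ψ u = ⟪∇f x, u⟫ + φ u`. Completing the square turns `σ/2 ‖u - x̄‖² + η/2 ‖u - x‖²` into
`(η+σ)/2 ‖u - c‖²` plus a constant, where `c = x - σ/(η+σ) • (x - x̄)`. So `x⁺` and `x⁺⁺` are the
images of `x` and `c` under the proximal map of `ψ` on `X` with parameter `η + σ`. This map is
firmly nonexpansive: adding the quadratic-growth inequalities of the two strongly convex problems,
each evaluated at the other's minimiser, gives `‖x⁺ - x⁺⁺‖² ≤ ⟪x⁺ - x⁺⁺, x - c⟫`. Hence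
`‖x⁺ - x⁺⁺‖ ≤ ‖x - c‖ = σ/(η+σ) ‖x - x̄‖`.
-/

section StrongConvexity

variable {E : Type*} [NormedAddCommGroup E] [InnerProductSpace ℝ E] {s : Set E}

lemma strongConvexOn_sq_norm_sub (hs : Convex ℝ s) (μ : ℝ) (p : E) :
    StrongConvexOn s μ fun u ↦ μ / 2 * ‖u - p‖ ^ 2 := by
  rw [strongConvexOn_iff_convex]
  have hlin : ConvexOn ℝ s fun u ↦ (-μ) * ⟪p, u⟫ + μ / 2 * ‖p‖ ^ 2 :=
    ((-μ) • innerₛₗ ℝ p).convexOn hs |>.add_const _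
  convert hlin using 2 with u
  rw [norm_sub_sq_real, real_inner_comm]
  ring

lemma ConvexOn.add_strongConvexOn {f g : E → ℝ} {m : ℝ} (hf : ConvexOn ℝ s f)
    (hg : StrongConvexOn s m g) : StrongConvexOn s m (f + g) := by
  simpa [StrongConvexOn] using hf.uniformConvexOn_zero.add hg

lemma StrongConvexOn.add_sq_norm_sub_le_of_isMinOn {f : E → ℝ} {m : ℝ} {z u : E}
    (hf : StrongConvexOn s m f) (hmin : IsMinOn f s z) (hz : z ∈ s) (hu : u ∈ s) :
    f z + m / 2 * ‖u - z‖ ^ 2 ≤ f u := by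
  have hshrink : ∀ t ∈ Set.Ioo (0 : ℝ) 1, f z + (1 - t) * (m / 2 * ‖u - z‖ ^ 2) ≤ f u := by
    rintro t ⟨ht0, ht1⟩
    have hmid := hf.2 hz hu (sub_nonneg.2 ht1.le) ht0.le (sub_add_cancel 1 t)
    have hle := isMinOn_iff.1 hmin _ (hf.1 hz hu (sub_nonneg.2 ht1.le) ht0.le (sub_add_cancel 1 t))
    rw [norm_sub_rev] at hmid
    simp only [smul_eq_mul] at hmid
    have hscaled : t * (f z + (1 - t) * (m / 2 * ‖u - z‖ ^ 2)) ≤ t * f u := by linarith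
    exact le_of_mul_le_mul_left hscaled ht0
  have hlim : Tendsto (fun t : ℝ ↦ f z + (1 - t) * (m / 2 * ‖u - z‖ ^ 2)) (𝓝[>] 0)
      (𝓝 (f z + m / 2 * ‖u - z‖ ^ 2)) := by
    have hcont : Continuous fun t : ℝ ↦ f z + (1 - t) * (m / 2 * ‖u - z‖ ^ 2) := by fun_prop
    exact tendsto_nhdsWithin_of_tendsto_nhds (hcont.tendsto' 0 _ (by simp))
  exact le_of_tendsto hlim (eventually_of_mem (Ioo_mem_nhdsGT one_pos) hshrink)

lemma sq_norm_sub_add_sq_norm_sub_eq {a b : ℝ} {p q c : E} (hc : a • (c - p) + b • (c - q) = 0)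
    (u : E) :
    a * ‖u - p‖ ^ 2 + b * ‖u - q‖ ^ 2 =
      (a + b) * ‖u - c‖ ^ 2 + (a * ‖c - p‖ ^ 2 + b * ‖c - q‖ ^ 2) := by
  have hcross : a * ⟪u - c, c - p⟫ + b * ⟪u - c, c - q⟫ = 0 := by
    rw [← real_inner_smul_right, ← real_inner_smul_right, ← inner_add_right, hc, inner_zero_right]
  rw [← sub_add_sub_cancel u c p, ← sub_add_sub_cancel u c q, norm_add_sq_real, norm_add_sq_real]
  linear_combination 2 * hcross

lemma sq_norm_sub_le_inner_of_isMinOn {ψ : E → ℝ} {μ : ℝ} {p₁ p₂ z₁ z₂ : E}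
    (hψ : ConvexOn ℝ s ψ) (hμ : 0 < μ)
    (h₁ : IsMinOn (fun u ↦ ψ u + μ / 2 * ‖u - p₁‖ ^ 2) s z₁) (hz₁ : z₁ ∈ s)
    (h₂ : IsMinOn (fun u ↦ ψ u + μ / 2 * ‖u - p₂‖ ^ 2) s z₂) (hz₂ : z₂ ∈ s) :
    ‖z₁ - z₂‖ ^ 2 ≤ ⟪z₁ - z₂, p₁ - p₂⟫ := by
  have hgrowth₁ := (hψ.add_strongConvexOn (strongConvexOn_sq_norm_sub hψ.1 μ p₁))
    |>.add_sq_norm_sub_le_of_isMinOn h₁ hz₁ hz₂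
  have hgrowth₂ := (hψ.add_strongConvexOn (strongConvexOn_sq_norm_sub hψ.1 μ p₂))
    |>.add_sq_norm_sub_le_of_isMinOn h₂ hz₂ hz₁
  have hpoly : ‖z₂ - p₁‖ ^ 2 - ‖z₁ - p₁‖ ^ 2 + ‖z₁ - p₂‖ ^ 2 - ‖z₂ - p₂‖ ^ 2 =
      2 * ⟪z₁ - z₂, p₁ - p₂⟫ := by
    simp only [norm_sub_sq_real, inner_sub_left, inner_sub_right, real_inner_comm]
    ring
  simp only [Pi.add_apply] at hgrowth₁ hgrowth₂
  rw [norm_sub_rev z₂ z₁] at hgrowth₁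
  have hμ_mul : μ * ‖z₁ - z₂‖ ^ 2 ≤ μ * ⟪z₁ - z₂, p₁ - p₂⟫ := by
    linear_combination hgrowth₁ + hgrowth₂ + μ / 2 * hpoly
  exact le_of_mul_le_mul_left hμ_mul hμ

lemma norm_sub_le_of_isMinOn {ψ : E → ℝ} {μ : ℝ} {p₁ p₂ z₁ z₂ : E}
    (hψ : ConvexOn ℝ s ψ) (hμ : 0 < μ)
    (h₁ : IsMinOn (fun u ↦ ψ u + μ / 2 * ‖u - p₁‖ ^ 2) s z₁) (hz₁ : z₁ ∈ s)
    (h₂ : IsMinOn (fun u ↦ ψ u + μ / 2 * ‖u - p₂‖ ^ 2) s z₂) (hz₂ : z₂ ∈ s) :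
    ‖z₁ - z₂‖ ≤ ‖p₁ - p₂‖ := by
  have hfirm := (sq_norm_sub_le_inner_of_isMinOn hψ hμ h₁ hz₁ h₂ hz₂).trans
    (real_inner_le_norm _ _)
  nlinarith [norm_nonneg (z₁ - z₂), norm_nonneg (p₁ - p₂)]

end StrongConvexity

theorem stmt_3_general {n : ℕ} (X : Set (EuclideanSpace ℝ (Fin n)))
    (hXconv : Convex ℝ X)
    (f φ : EuclideanSpace ℝ (Fin n) → ℝ)
    (hφ : ConvexOn ℝ Set.univ φ)
    (η σ : ℝ) (hη : 0 < η) (hσ : 0 ≤ σ)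
    (x xb xp xpp : EuclideanSpace ℝ (Fin n))
    (hxp : xp ∈ X ∧ ∀ u ∈ X,
      ⟪gradient f x, xp⟫ + φ xp + (η + σ) / 2 * ‖xp - x‖ ^ 2 ≤
      ⟪gradient f x, u⟫ + φ u + (η + σ) / 2 * ‖u - x‖ ^ 2)
    (hxpp : xpp ∈ X ∧ ∀ u ∈ X,
      ⟪gradient f x, xpp⟫ + φ xpp + σ / 2 * ‖xpp - xb‖ ^ 2 + η / 2 * ‖xpp - x‖ ^ 2 ≤
      ⟪gradient f x, u⟫ + φ u + σ / 2 * ‖u - xb‖ ^ 2 + η / 2 * ‖u - x‖ ^ 2) :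
    ‖xp - xpp‖ ≤ σ / (η + σ) * ‖x - xb‖ := by
  have hμ : 0 < η + σ := by linarith
  set ψ := fun u ↦ ⟪gradient f x, u⟫ + φ u
  have hψ : ConvexOn ℝ X ψ :=
    ((innerₛₗ ℝ (gradient f x)).convexOn hXconv).add (hφ.subset (Set.subset_univ X) hXconv)
  set c := x - (σ / (η + σ)) • (x - xb)
  have hc : (σ / 2) • (c - xb) + (η / 2) • (c - x) = 0 := by
    have hscalar : σ / 2 * (1 - σ / (η + σ)) - η / 2 * (σ / (η + σ)) = 0 := by
      field_simp
      ring
    calc (σ / 2) • (c - xb) + (η / 2) • (c - x)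
        = (σ / 2 * (1 - σ / (η + σ)) - η / 2 * (σ / (η + σ))) • (x - xb) := by
          simp only [c]
          module
      _ = 0 := by rw [hscalar, zero_smul]
  have hxp_min : IsMinOn (fun u ↦ ψ u + (η + σ) / 2 * ‖u - x‖ ^ 2) X xp :=
    isMinOn_iff.2 hxp.2
  have hxpp_min : IsMinOn (fun u ↦ ψ u + (η + σ) / 2 * ‖u - c‖ ^ 2) X xpp := by
    refine isMinOn_iff.2 fun u hu ↦ ?_
    have hle := hxpp.2 u hu
    have hsquare_u := sq_norm_sub_add_sq_norm_sub_eq hc u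
    have hsquare_xpp := sq_norm_sub_add_sq_norm_sub_eq hc xpp
    simp only [ψ]
    linarith
  calc ‖xp - xpp‖ ≤ ‖x - c‖ := norm_sub_le_of_isMinOn hψ hμ hxp_min hxp.1 hxpp_min hxpp.1
    _ = σ / (η + σ) * ‖x - xb‖ := by
      rw [sub_sub_cancel, norm_smul, Real.norm_of_nonneg (by positivity)]

theorem stmt_3 {n : ℕ} (X : Set (EuclideanSpace ℝ (Fin n)))
    (hXne : X.Nonempty) (hXclosed : IsClosed X) (hXconv : Convex ℝ X)
    (f φ : EuclideanSpace ℝ (Fin n) → ℝ)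
    (hf : ConvexOn ℝ Set.univ f) (hdiff : Differentiable ℝ f)
    (hφ : ConvexOn ℝ Set.univ φ)
    (η σ : ℝ) (hη : 0 < η) (hσ : 0 ≤ σ)
    (x xb xp xpp : EuclideanSpace ℝ (Fin n))
    (hxp : xp ∈ X ∧ ∀ u ∈ X,
      ⟪gradient f x, xp⟫ + φ xp + (η + σ) / 2 * ‖xp - x‖ ^ 2 ≤
      ⟪gradient f x, u⟫ + φ u + (η + σ) / 2 * ‖u - x‖ ^ 2)
    (hxpp : xpp ∈ X ∧ ∀ u ∈ X,
      ⟪gradient f x, xpp⟫ + φ xpp + σ / 2 * ‖xpp - xb‖ ^ 2 + η / 2 * ‖xpp - x‖ ^ 2 ≤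
      ⟪gradient f x, u⟫ + φ u + σ / 2 * ‖u - xb‖ ^ 2 + η / 2 * ‖u - x‖ ^ 2) :
    ‖xp - xpp‖ ≤ σ / (η + σ) * ‖x - xb‖ :=
  stmt_3_general X hXconv f φ hφ η σ hη hσ x xb xp xpp hxp hxpp
end

section
/- Let X ⊆ ℝⁿ be closed convex, f convex differentiable, φ convex. For η > 0 and x ∈ ℝⁿ define x⁺(η; x) := argmin_{u∈X} ⟨∇f(x), u⟩ + φ(u) + (η/2)‖u - x‖² and G_η(x) := η(x - x⁺(η; x)). Then for any σ ≥ 0, ‖G_η(x)‖ ≤ ‖G_{σ+η}(x)‖, i.e., η‖x - x⁺(η;x)‖ ≤ (σ+η)‖x - x⁺(σ+η;x)‖. -/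
open scoped RealInnerProductSpace

/-- Parallelogram-type identity for convex combinations in a real inner product space. -/
lemma combo_norm_sq {n : ℕ} (u v : EuclideanSpace ℝ (Fin n)) (t : ℝ) :
    ‖(1 - t) • u + t • v‖ ^ 2 =
      (1 - t) * ‖u‖ ^ 2 + t * ‖v‖ ^ 2 - t * (1 - t) * ‖u - v‖ ^ 2 := by
  have h1 : ‖(1 - t) • u + t • v‖ ^ 2 = ⟪(1 - t) • u + t • v, (1 - t) • u + t • v⟫ :=
    (real_inner_self_eq_norm_sq _).symm
  have h2 : ‖u - v‖ ^ 2 = ⟪u - v, u - v⟫ := (real_inner_self_eq_norm_sq _).symm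
  have hu : ‖u‖ ^ 2 = ⟪u, u⟫ := (real_inner_self_eq_norm_sq _).symm
  have hv : ‖v‖ ^ 2 = ⟪v, v⟫ := (real_inner_self_eq_norm_sq _).symm
  simp only [h1, h2, hu, hv, inner_add_add_self, inner_sub_sub_self,
    real_inner_smul_left, real_inner_smul_right]
  ring

/-- Strong-convexity refinement of the minimizer property. -/
lemma min_strong {n : ℕ} (X : Set (EuclideanSpace ℝ (Fin n))) (hXconv : Convex ℝ X)
    (φ : EuclideanSpace ℝ (Fin n) → ℝ) (hφ : ConvexOn ℝ Set.univ φ)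
    (g x a b : EuclideanSpace ℝ (Fin n)) (μ : ℝ) (hμ : 0 < μ)
    (ha : a ∈ X) (hb : b ∈ X)
    (hmin : ∀ u ∈ X, ⟪g, a⟫ + φ a + μ / 2 * ‖a - x‖ ^ 2 ≤
      ⟪g, u⟫ + φ u + μ / 2 * ‖u - x‖ ^ 2) :
    ⟪g, a⟫ + φ a + μ / 2 * ‖a - x‖ ^ 2 + μ / 2 * ‖a - b‖ ^ 2 ≤
      ⟪g, b⟫ + φ b + μ / 2 * ‖b - x‖ ^ 2 := by
  have key : ∀ t : ℝ, 0 < t → t ≤ 1 →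
      ⟪g, a⟫ + φ a + μ / 2 * ‖a - x‖ ^ 2 + μ / 2 * (1 - t) * ‖a - b‖ ^ 2 ≤
        ⟪g, b⟫ + φ b + μ / 2 * ‖b - x‖ ^ 2 := by
    intro t ht ht1
    set m : EuclideanSpace ℝ (Fin n) := (1 - t) • a + t • b with hm
    have hmX : m ∈ X := hXconv ha hb (by linarith) (le_of_lt ht) (by ring)
    have hinner : ⟪g, m⟫ = (1 - t) * ⟪g, a⟫ + t * ⟪g, b⟫ := by
      rw [hm, inner_add_right, real_inner_smul_right, real_inner_smul_right]
    have hφm : φ m ≤ (1 - t) * φ a + t * φ b :=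
      hφ.2 (Set.mem_univ a) (Set.mem_univ b) (by linarith) (le_of_lt ht) (by ring)
    have hnorm : ‖m - x‖ ^ 2 =
        (1 - t) * ‖a - x‖ ^ 2 + t * ‖b - x‖ ^ 2 - t * (1 - t) * ‖a - b‖ ^ 2 := by
      have hmx : m - x = (1 - t) • (a - x) + t • (b - x) := by
        simp [hm, smul_sub]; module
      have habx : (a - x) - (b - x) = a - b := by abel
      rw [hmx, combo_norm_sq, habx]
    have h1 := hmin m hmX
    rw [hinner, hnorm] at h1
    have h2 : t * (⟪g, b⟫ + φ b + μ / 2 * ‖b - x‖ ^ 2) ≥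
        t * (⟪g, a⟫ + φ a + μ / 2 * ‖a - x‖ ^ 2 + μ / 2 * (1 - t) * ‖a - b‖ ^ 2) := by
      nlinarith [hφm]
    exact le_of_mul_le_mul_left (by linarith) ht
  apply le_of_forall_pos_le_add
  intro ε hε
  set K := μ / 2 * ‖a - b‖ ^ 2 with hK
  have hK0 : 0 ≤ K := by positivity
  rcases eq_or_lt_of_le hK0 with h0 | hKpos
  · have := key 1 one_pos le_rfl
    simp only [← h0] at *
    nlinarith [key 1 one_pos le_rfl]
  · set t := min 1 (ε / K) with htdef
    have ht0 : 0 < t := lt_min one_pos (div_pos hε hKpos)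
    have ht1 : t ≤ 1 := min_le_left _ _
    have h := key t ht0 ht1
    have htK : t * K ≤ ε := by
      calc t * K ≤ (ε / K) * K := by
            apply mul_le_mul_of_nonneg_right (min_le_right _ _) (le_of_lt hKpos)
      _ = ε := by field_simp
    nlinarith [h]

set_option maxHeartbeats 1000000 in
theorem stmt_4 {n : ℕ} (X : Set (EuclideanSpace ℝ (Fin n)))
    (hXne : X.Nonempty) (hXclosed : IsClosed X) (hXconv : Convex ℝ X)
    (f φ : EuclideanSpace ℝ (Fin n) → ℝ)
    (hf : ConvexOn ℝ Set.univ f) (hdiff : Differentiable ℝ f)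
    (hφ : ConvexOn ℝ Set.univ φ)
    (η σ : ℝ) (hη : 0 < η) (hσ : 0 ≤ σ)
    (x xpη xpση : EuclideanSpace ℝ (Fin n))
    (hxpη : xpη ∈ X ∧ ∀ u ∈ X,
      ⟪gradient f x, xpη⟫ + φ xpη + η / 2 * ‖xpη - x‖ ^ 2 ≤
      ⟪gradient f x, u⟫ + φ u + η / 2 * ‖u - x‖ ^ 2)
    (hxpση : xpση ∈ X ∧ ∀ u ∈ X,
      ⟪gradient f x, xpση⟫ + φ xpση + (σ + η) / 2 * ‖xpση - x‖ ^ 2 ≤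
      ⟪gradient f x, u⟫ + φ u + (σ + η) / 2 * ‖u - x‖ ^ 2) :
    η * ‖x - xpη‖ ≤ (σ + η) * ‖x - xpση‖ := by
  obtain ⟨haX, hamin⟩ := hxpη
  obtain ⟨hbX, hbmin⟩ := hxpση
  set g := gradient f x
  set a := xpη
  set b := xpση
  have hA := min_strong X hXconv φ hφ g x a b η hη haX hbX hamin
  have hB := min_strong X hXconv φ hφ g x b a (σ + η) (by linarith) hbX haX hbmin
  -- note ‖b - a‖ = ‖a - b‖
  have hba : ‖b - a‖ = ‖a - b‖ := norm_sub_rev _ _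
  rw [hba] at hB
  set p := ‖x - a‖ with hp
  set q := ‖x - b‖ with hq
  set r := ‖a - b‖ with hr
  have hpa : ‖a - x‖ = p := by rw [hp, norm_sub_rev]
  have hqb : ‖b - x‖ = q := by rw [hq, norm_sub_rev]
  rw [hpa, hqb] at hA hB
  have hp0 : 0 ≤ p := norm_nonneg _
  have hq0 : 0 ≤ q := norm_nonneg _
  have hr0 : 0 ≤ r := norm_nonneg _
  have hr1 : p - q ≤ r := by
    have := norm_sub_norm_le (x - a) (x - b)
    have hab : (x - a) - (x - b) = b - a := by abel
    rw [hab, ← hp, ← hq, norm_sub_rev] at this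
    linarith [this]
  have hr2 : q - p ≤ r := by
    have := norm_sub_norm_le (x - b) (x - a)
    have hab : (x - b) - (x - a) = a - b := by abel
    rw [hab, ← hp, ← hq] at this
    linarith [this]
  -- Adding hA and hB: σ * (p² - q²) ≥ (σ + 2η) * r²
  have hmain : (σ + 2 * η) * r ^ 2 ≤ σ * (p ^ 2 - q ^ 2) := by nlinarith [hA, hB]
  have hsq : (p - q) ^ 2 ≤ r ^ 2 := by nlinarith [hr1, hr2]
  have hF : (σ + 2 * η) * (p - q) ^ 2 ≤ σ * (p ^ 2 - q ^ 2) := by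
    have := mul_le_mul_of_nonneg_left hsq (by linarith : (0:ℝ) ≤ σ + 2 * η)
    linarith
  by_contra hcon
  push_neg at hcon
  have hpq : 0 < p - q := by nlinarith [mul_nonneg hσ hq0]
  nlinarith [hF, mul_pos hpq (by nlinarith [mul_nonneg hσ hq0] : (0:ℝ) < η * p - (σ + η) * q)]
end

section
/- Let X ⊆ ℝⁿ be closed convex, f convex differentiable, φ convex, η > 0, σ ≥ 0, M > 0 with η ≥ 2M ≥ 0. Let x⁺⁺ := argmin_{u∈X} ⟨∇f(x), u⟩ + φ(u) + (σ/2)‖u - x̄‖² + (η/2)‖u - x‖². If f(x⁺⁺) - f(x) - ⟨∇f(x), x⁺⁺ - x⟩ ≤ (M/2)‖x⁺⁺ - x‖², then for all u ∈ X: [f(x⁺⁺) + φ(x⁺⁺) + (σ/2)‖x⁺⁺ - x̄‖²] - [f(u) + φ(u) + (σ/2)‖u - x̄‖²] ≤ (η/2)‖u - x‖² - ((σ+η)/2)‖u - x⁺⁺‖² - ((η-M)/2)‖x⁺⁺ - x‖². -/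
/-!
The prox objective `F u := ⟪∇f x, u⟫ + φ u + σ/2 ‖u - x̄‖² + η/2 ‖u - x‖²` is `(σ + η)`-strongly
convex, so its minimiser `x⁺⁺` over `X` satisfies the quadratic growth bound
`F x⁺⁺ + (σ + η)/2 ‖u - x⁺⁺‖² ≤ F u`. Adding the gradient inequality `f x + ⟪∇f x, u - x⟫ ≤ f u`
and the descent hypothesis at `x⁺⁺`, the linear terms in `∇f x` cancel and what remains is the
claim.
-/

open scoped RealInnerProductSpace
open Set Filter Topology

section NormedSpace
variable {E : Type*} [NormedAddCommGroup E] [NormedSpace ℝ E] {s : Set E} {f : E → ℝ}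

lemma ConvexOn.add_fderiv_sub_le {f' : E →L[ℝ] ℝ} {x y : E} (hf : ConvexOn ℝ s f)
    (hx : x ∈ s) (hy : y ∈ s) (hf' : HasFDerivAt f f' x) :
    f x + f' (y - x) ≤ f y := by
  let L : ℝ →ᵃ[ℝ] E := AffineMap.lineMap x y
  have hL0 : L 0 = x := AffineMap.lineMap_apply_zero x y
  have hL1 : L 1 = y := AffineMap.lineMap_apply_one x y
  have hconv : ConvexOn ℝ (L ⁻¹' s) (f ∘ L) := hf.comp_affineMap L
  have hderiv : HasDerivAt (f ∘ L) (f' (y - x)) 0 :=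
    (hL0 ▸ hf').comp_hasDerivAt 0 AffineMap.hasDerivAt_lineMap
  have hslope := hconv.le_slope_of_hasDerivAt (by simpa [hL0] using hx)
    (by simpa [hL1] using hy) one_pos hderiv
  simp only [slope_def_field, Function.comp_apply, hL0, hL1, sub_zero, div_one] at hslope
  linarith

lemma StrongConvexOn.add_mul_sq_norm_sub_le_of_isMinOn {m : ℝ} {x y : E}
    (hf : StrongConvexOn s m f) (hmin : IsMinOn f s x) (hx : x ∈ s) (hy : y ∈ s) :
    f x + m / 2 * ‖y - x‖ ^ 2 ≤ f y := by
  have hsegment : ∀ t ∈ Ioo (0 : ℝ) 1, (1 - t) * (m / 2 * ‖y - x‖ ^ 2) ≤ f y - f x := by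
    intro t ⟨ht0, ht1⟩
    have hconv := hf.2 hx hy (by linarith) ht0.le (sub_add_cancel 1 t)
    have hle : f x ≤ f ((1 - t) • x + t • y) :=
      hmin (hf.1 hx hy (by linarith) ht0.le (sub_add_cancel 1 t))
    simp only [smul_eq_mul, norm_sub_rev x y] at hconv
    refine le_of_mul_le_mul_left ?_ ht0
    nlinarith
  have hlim : Tendsto (fun t : ℝ ↦ (1 - t) * (m / 2 * ‖y - x‖ ^ 2)) (𝓝[>] 0)
      (𝓝 (m / 2 * ‖y - x‖ ^ 2)) := by
    have : Continuous fun t : ℝ ↦ (1 - t) * (m / 2 * ‖y - x‖ ^ 2) := by fun_prop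
    simpa using (this.tendsto 0).mono_left nhdsWithin_le_nhds
  have hbound := le_of_tendsto hlim <| mem_of_superset (Ioo_mem_nhdsGT one_pos) hsegment
  linarith

end NormedSpace

section InnerProductSpace
variable {E : Type*} [NormedAddCommGroup E] [InnerProductSpace ℝ E] {s : Set E} {f : E → ℝ}

lemma StrongConvexOn.add_mul_sq_norm_sub {m : ℝ} (hf : StrongConvexOn s m f) (c : ℝ) (p : E) :
    StrongConvexOn s (m + c) fun u ↦ f u + c / 2 * ‖u - p‖ ^ 2 := by
  rw [strongConvexOn_iff_convex] at hf ⊢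
  -- `c / 2 * (‖u - p‖ ^ 2 - ‖u‖ ^ 2)` is affine in `u`
  have haffine : ConvexOn ℝ s fun u ↦ (-c) * ⟪p, u⟫ + c / 2 * ‖p‖ ^ 2 :=
    ((-c) • innerₛₗ ℝ p).convexOn hf.1 |>.add_const _
  refine (hf.add haffine).congr fun u _ ↦ ?_
  simp only [Pi.add_apply, norm_sub_sq_real, real_inner_comm p u]
  ring

end InnerProductSpace

theorem stmt_5_general {n : ℕ} (X : Set (EuclideanSpace ℝ (Fin n)))
    (hXconv : Convex ℝ X)
    (f φ : EuclideanSpace ℝ (Fin n) → ℝ)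
    (hf : ConvexOn ℝ Set.univ f) (hdiff : Differentiable ℝ f)
    (hφ : ConvexOn ℝ Set.univ φ)
    (η σ M : ℝ)
    (x xb xpp : EuclideanSpace ℝ (Fin n))
    (hxpp : xpp ∈ X ∧ ∀ u ∈ X,
      ⟪gradient f x, xpp⟫ + φ xpp + σ / 2 * ‖xpp - xb‖ ^ 2 + η / 2 * ‖xpp - x‖ ^ 2 ≤
      ⟪gradient f x, u⟫ + φ u + σ / 2 * ‖u - xb‖ ^ 2 + η / 2 * ‖u - x‖ ^ 2)
    (hdesc : f xpp - f x - ⟪gradient f x, xpp - x⟫ ≤ M / 2 * ‖xpp - x‖ ^ 2) :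
    ∀ u ∈ X,
      (f xpp + φ xpp + σ / 2 * ‖xpp - xb‖ ^ 2) - (f u + φ u + σ / 2 * ‖u - xb‖ ^ 2) ≤
      η / 2 * ‖u - x‖ ^ 2 - (σ + η) / 2 * ‖u - xpp‖ ^ 2 - (η - M) / 2 * ‖xpp - x‖ ^ 2 := by
  intro u hu
  set g := gradient f x
  have hconvex : ConvexOn ℝ X fun v ↦ ⟪g, v⟫ + φ v :=
    ((innerₛₗ ℝ g).convexOn hXconv).add (hφ.subset (subset_univ X) hXconv)
  have hstrong := ((strongConvexOn_zero.2 hconvex).add_mul_sq_norm_sub σ xb).add_mul_sq_norm_sub η x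
  have hgrowth := hstrong.add_mul_sq_norm_sub_le_of_isMinOn hxpp.2 hxpp.1 hu
  have hgrad := hf.add_fderiv_sub_le (mem_univ x) (mem_univ u) (hdiff x).hasGradientAt.hasFDerivAt
  rw [InnerProductSpace.toDual_apply_apply] at hgrad
  simp only [inner_sub_right] at hgrad hdesc
  simp only [zero_add] at hgrowth
  linarith

theorem stmt_5 {n : ℕ} (X : Set (EuclideanSpace ℝ (Fin n)))
    (hXne : X.Nonempty) (hXclosed : IsClosed X) (hXconv : Convex ℝ X)
    (f φ : EuclideanSpace ℝ (Fin n) → ℝ)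
    (hf : ConvexOn ℝ Set.univ f) (hdiff : Differentiable ℝ f)
    (hφ : ConvexOn ℝ Set.univ φ)
    (η σ M : ℝ) (hη : 0 < η) (hσ : 0 ≤ σ) (hM : 0 < M) (hηM : η ≥ 2 * M)
    (x xb xpp : EuclideanSpace ℝ (Fin n))
    (hxpp : xpp ∈ X ∧ ∀ u ∈ X,
      ⟪gradient f x, xpp⟫ + φ xpp + σ / 2 * ‖xpp - xb‖ ^ 2 + η / 2 * ‖xpp - x‖ ^ 2 ≤
      ⟪gradient f x, u⟫ + φ u + σ / 2 * ‖u - xb‖ ^ 2 + η / 2 * ‖u - x‖ ^ 2)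
    (hdesc : f xpp - f x - ⟪gradient f x, xpp - x⟫ ≤ M / 2 * ‖xpp - x‖ ^ 2) :
    ∀ u ∈ X,
      (f xpp + φ xpp + σ / 2 * ‖xpp - xb‖ ^ 2) - (f u + φ u + σ / 2 * ‖u - xb‖ ^ 2) ≤
      η / 2 * ‖u - x‖ ^ 2 - (σ + η) / 2 * ‖u - xpp‖ ^ 2 - (η - M) / 2 * ‖xpp - x‖ ^ 2 :=
  stmt_5_general X hXconv f φ hf hdiff hφ η σ M x xb xpp hxpp hdesc
end

section
/- Let f: ℝⁿ → ℝ be differentiable with lower curvature constant l > 0 (i.e., f(y) - f(x) - ⟨∇f(x), y-x⟩ ≥ -(l/2)‖y-x‖² for all x, y). For fixed x^{i-1}, let x^i minimize f(x) + l‖x - x^{i-1}‖². Then f(x^{i-1}) - f(x^i) ≥ 3‖∇f(x^i)‖²/(8l). -/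
open scoped RealInnerProductSpace

theorem stmt_7 {n : ℕ} (f : EuclideanSpace ℝ (Fin n) → ℝ)
    (hdiff : Differentiable ℝ f)
    (l : ℝ) (hl : 0 < l)
    (hcurv : ∀ x y, f y - f x - ⟪gradient f x, y - x⟫ ≥ -(l / 2) * ‖y - x‖ ^ 2)
    (xprev xi : EuclideanSpace ℝ (Fin n))
    (hmin : ∀ y, f xi + l * ‖xi - xprev‖ ^ 2 ≤ f y + l * ‖y - xprev‖ ^ 2) :
    f xprev - f xi ≥ 3 * ‖gradient f xi‖ ^ 2 / (8 * l) := by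
  set g := gradient f xi with hg
  set d : EuclideanSpace ℝ (Fin n) := xi - xprev with hd
  have hgradAt : HasGradientAt f g xi := (hdiff xi).hasGradientAt
  have hf' : HasFDerivAt f ((InnerProductSpace.toDual ℝ (EuclideanSpace ℝ (Fin n))) g) xi :=
    hgradAt.hasFDerivAt
  have h1 : HasFDerivAt (fun y : EuclideanSpace ℝ (Fin n) => y - xprev)
      (ContinuousLinearMap.id ℝ (EuclideanSpace ℝ (Fin n))) xi :=
    (hasFDerivAt_id xi).sub_const xprev
  have h2 := (h1.inner ℝ h1).const_mul l
  have hsq : (fun y : EuclideanSpace ℝ (Fin n) => l * ⟪y - xprev, y - xprev⟫) =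
      fun y : EuclideanSpace ℝ (Fin n) => l * ‖y - xprev‖ ^ 2 := by
    funext y; rw [real_inner_self_eq_norm_sq]
  rw [hsq] at h2
  have hφ : HasFDerivAt (fun y : EuclideanSpace ℝ (Fin n) => f y + l * ‖y - xprev‖ ^ 2)
      ((InnerProductSpace.toDual ℝ (EuclideanSpace ℝ (Fin n))) g +
        l • ((fderivInnerCLM ℝ (xi - xprev, xi - xprev)).comp
          ((ContinuousLinearMap.id ℝ (EuclideanSpace ℝ (Fin n))).prod
            (ContinuousLinearMap.id ℝ (EuclideanSpace ℝ (Fin n)))))) xi := hf'.add h2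
  have hloc : IsLocalMin (fun y : EuclideanSpace ℝ (Fin n) => f y + l * ‖y - xprev‖ ^ 2) xi :=
    Filter.Eventually.of_forall (fun y => hmin y)
  have hzero : fderiv ℝ (fun y : EuclideanSpace ℝ (Fin n) => f y + l * ‖y - xprev‖ ^ 2) xi = 0 :=
    hloc.fderiv_eq_zero
  have hFeq := hφ.fderiv
  rw [hzero] at hFeq
  have hkey : ∀ v : EuclideanSpace ℝ (Fin n), ⟪g, v⟫ + l * (⟪d, v⟫ + ⟪v, d⟫) = 0 := by
    intro v
    have := DFunLike.congr_fun hFeq.symm v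
    simpa [fderivInnerCLM, hd] using this
  have hgd : g = (-(2 * l)) • d := by
    have hv : ∀ v : EuclideanSpace ℝ (Fin n), ⟪g - (-(2 * l)) • d, v⟫ = 0 := by
      intro v
      have h := hkey v
      rw [inner_sub_left, inner_smul_left]
      have hcomm : ⟪d, v⟫ = ⟪v, d⟫ := real_inner_comm v d
      simp only [conj_trivial]
      linear_combination h + l * hcomm
    have := hv (g - (-(2 * l)) • d)
    rw [← sub_eq_zero]
    exact inner_self_eq_zero.mp this
  have hnorm : ‖g‖ ^ 2 = (2 * l) ^ 2 * ‖d‖ ^ 2 := by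
    rw [hgd, norm_smul, mul_pow, Real.norm_eq_abs, sq_abs, neg_sq]
  have hip : ⟪g, xprev - xi⟫ = 2 * l * ‖d‖ ^ 2 := by
    have hdn : xprev - xi = -d := by rw [hd]; abel
    rw [hdn, hgd, inner_smul_left, inner_neg_right, real_inner_self_eq_norm_sq]
    simp only [conj_trivial]
    ring
  have hc := hcurv xi xprev
  have hdn : xprev - xi = -d := by rw [hd]; abel
  rw [hip] at hc
  rw [hdn, norm_neg] at hc
  rw [hnorm]
  rw [ge_iff_le, div_le_iff₀ (by positivity)]
  nlinarith [sq_nonneg ‖d‖]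
end

section
/- Let f be differentiable with l-lower curvature (l > 0), x^0 ∈ ℝⁿ, x* a global minimizer of f, and define x^i = argmin_x f(x) + l‖x - x^{i-1}‖² for i = 1,…,N. Then min_{1≤i≤N} ‖∇f(x^i)‖² ≤ 8l(f(x^0) - f(x*))/(3N). -/
open scoped RealInnerProductSpace

theorem grad_aux {n : ℕ} (f : EuclideanSpace ℝ (Fin n) → ℝ) (hdiff : Differentiable ℝ f)
    (l : ℝ) (c u : EuclideanSpace ℝ (Fin n))
    (hmin : ∀ y, f u + l * ‖u - c‖ ^ 2 ≤ f y + l * ‖y - c‖ ^ 2) :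
    gradient f u = (-(2*l)) • (u - c) := by
  have hid : HasFDerivAt (fun y : EuclideanSpace ℝ (Fin n) => y - c)
      (ContinuousLinearMap.id ℝ (EuclideanSpace ℝ (Fin n))) u :=
    (hasFDerivAt_id u).sub_const c
  have h1 : HasFDerivAt (fun y : EuclideanSpace ℝ (Fin n) => ⟪y - c, y - c⟫)
      ((fderivInnerCLM ℝ (u - c, u - c)).comp
        ((ContinuousLinearMap.id ℝ (EuclideanSpace ℝ (Fin n))).prod
          (ContinuousLinearMap.id ℝ (EuclideanSpace ℝ (Fin n))))) u :=
    HasFDerivAt.inner ℝ hid hid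
  have hf : HasFDerivAt f
      ((InnerProductSpace.toDual ℝ (EuclideanSpace ℝ (Fin n))) (gradient f u)) u :=
    ((hdiff u).hasGradientAt).hasFDerivAt
  have hg : HasFDerivAt (fun y : EuclideanSpace ℝ (Fin n) => f y + l * ‖y - c‖ ^ 2)
      ((InnerProductSpace.toDual ℝ (EuclideanSpace ℝ (Fin n))) (gradient f u) +
        l • ((fderivInnerCLM ℝ (u - c, u - c)).comp
          ((ContinuousLinearMap.id ℝ (EuclideanSpace ℝ (Fin n))).prod
            (ContinuousLinearMap.id ℝ (EuclideanSpace ℝ (Fin n)))))) u := by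
    have heq : (fun y : EuclideanSpace ℝ (Fin n) => f y + l * ‖y - c‖ ^ 2)
        = fun y => f y + l * ⟪y - c, y - c⟫ := by
      funext y; rw [real_inner_self_eq_norm_sq]
    rw [heq]
    exact hf.add (h1.const_smul l)
  have hloc : IsLocalMin (fun y : EuclideanSpace ℝ (Fin n) => f y + l * ‖y - c‖ ^ 2) u :=
    Filter.Eventually.of_forall hmin
  have hzero := hloc.fderiv_eq_zero
  rw [hg.fderiv] at hzero
  refine (ext_inner_left ℝ fun v => ?_).symm
  have hv := DFunLike.congr_fun hzero v
  simp only [ContinuousLinearMap.add_apply, ContinuousLinearMap.smul_apply,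
    ContinuousLinearMap.comp_apply, ContinuousLinearMap.prod_apply,
    ContinuousLinearMap.id_apply, fderivInnerCLM_apply,
    InnerProductSpace.toDual_apply_apply, ContinuousLinearMap.zero_apply, smul_eq_mul] at hv
  have hv2 : ⟪v, gradient f u⟫ + (2*l) * ⟪v, u - c⟫ = 0 := by
    linear_combination hv + real_inner_comm (gradient f u) v + l * real_inner_comm (u - c) v
  rw [real_inner_smul_right]
  linear_combination -hv2

theorem stmt_8 {n : ℕ} (f : EuclideanSpace ℝ (Fin n) → ℝ)
    (hdiff : Differentiable ℝ f)
    (l : ℝ) (hl : 0 < l)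
    (hcurv : ∀ x y, f y - f x - ⟪gradient f x, y - x⟫ ≥ -(l / 2) * ‖y - x‖ ^ 2)
    (xstar : EuclideanSpace ℝ (Fin n)) (hstar : ∀ y, f xstar ≤ f y)
    (x : ℕ → EuclideanSpace ℝ (Fin n))
    (N : ℕ) (hN : 1 ≤ N)
    (hiter : ∀ i, 1 ≤ i → i ≤ N →
      ∀ y, f (x i) + l * ‖x i - x (i - 1)‖ ^ 2 ≤ f y + l * ‖y - x (i - 1)‖ ^ 2) :
    ∃ i, 1 ≤ i ∧ i ≤ N ∧
      ‖gradient f (x i)‖ ^ 2 ≤ 8 * l * (f (x 0) - f xstar) / (3 * N) := by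
  -- gradient identity at each iterate
  have hgrad : ∀ i, 1 ≤ i → i ≤ N →
      gradient f (x i) = (-(2*l)) • (x i - x (i-1)) := fun i h1 h2 =>
    grad_aux f hdiff l (x (i-1)) (x i) (hiter i h1 h2)
  -- per-step decrease
  have key : ∀ i, 1 ≤ i → i ≤ N →
      (3*l/2) * ‖x i - x (i-1)‖ ^ 2 ≤ f (x (i-1)) - f (x i) := by
    intro i h1 h2
    have hc := hcurv (x i) (x (i-1))
    have hip : ⟪gradient f (x i), x (i-1) - x i⟫ = 2*l*‖x i - x (i-1)‖ ^ 2 := by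
      rw [hgrad i h1 h2, real_inner_smul_left, show x (i-1) - x i = -(x i - x (i-1)) by abel,
        inner_neg_right, real_inner_self_eq_norm_sq]
      ring
    have hnr : ‖x (i-1) - x i‖ = ‖x i - x (i-1)‖ := norm_sub_rev _ _
    rw [hip, hnr] at hc
    linarith
  -- pick the index with smallest step
  obtain ⟨j0, hj0mem, hj0min⟩ := Finset.exists_min_image (Finset.range N)
    (fun j => ‖x (j+1) - x j‖ ^ 2) ⟨0, Finset.mem_range.mpr (by omega)⟩
  have hj0 : j0 < N := Finset.mem_range.mp hj0mem
  -- telescoping sum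
  have hsum : ∑ j ∈ Finset.range N, (f (x j) - f (x (j+1))) = f (x 0) - f (x N) :=
    Finset.sum_range_sub' (fun j => f (x j)) N
  have hterm : ∀ j ∈ Finset.range N,
      (3*l/2) * ‖x (j0+1) - x j0‖ ^ 2 ≤ f (x j) - f (x (j+1)) := by
    intro j hj
    have hjN := Finset.mem_range.mp hj
    have h2 := key (j+1) (by omega) (by omega)
    simp only [Nat.add_sub_cancel] at h2
    refine le_trans ?_ h2
    have := hj0min j hj
    nlinarith [this]
  have hcard : (N : ℝ) * ((3*l/2) * ‖x (j0+1) - x j0‖ ^ 2) ≤ f (x 0) - f (x N) := by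
    rw [← hsum]
    calc (N : ℝ) * ((3*l/2) * ‖x (j0+1) - x j0‖ ^ 2)
        = ∑ _j ∈ Finset.range N, (3*l/2) * ‖x (j0+1) - x j0‖ ^ 2 := by
          rw [Finset.sum_const, Finset.card_range, nsmul_eq_mul]
      _ ≤ ∑ j ∈ Finset.range N, (f (x j) - f (x (j+1))) := Finset.sum_le_sum hterm
  have hfN : f xstar ≤ f (x N) := hstar _
  have hH : (N : ℝ) * ((3*l/2) * ‖x (j0+1) - x j0‖ ^ 2) ≤ f (x 0) - f xstar := by
    linarith
  refine ⟨j0 + 1, by omega, by omega, ?_⟩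
  have hge : gradient f (x (j0+1)) = (-(2*l)) • (x (j0+1) - x j0) := by
    have := hgrad (j0+1) (by omega) (by omega)
    simpa using this
  have hnorm : ‖gradient f (x (j0+1))‖ ^ 2 = 4*l^2 * ‖x (j0+1) - x j0‖ ^ 2 := by
    rw [hge, norm_smul, mul_pow, Real.norm_eq_abs, sq_abs]
    ring
  rw [hnorm, le_div_iff₀ (by positivity)]
  have hNpos : (0:ℝ) < N := by exact_mod_cast hN
  nlinarith [mul_le_mul_of_nonneg_left hH (by positivity : (0:ℝ) ≤ 8*l)]
end

section
/- With σ₀ = 0 < σ₁ < σ₂ < ⋯, prox-centers x̄_s := (1 - γ_s)x̄_{s-1} + γ_s x_{s-1} where γ_s = 1 - σ_{s-1}/σ_s and x̄₀ = x₀, and x_s^* the minimizer of f(x) + (σ_s/2)‖x - x̄_s‖² for convex differentiable f, the identity σ_s(x̄_s - x_s^*) = Σ_{i=1}^s [σ_{i-1}(x_{i-1}^* - x_{i-1}) + σ_i(x_{i-1} - x_i^*)] holds, and hence σ_s‖x̄_s - x_s^*‖ ≤ Σ_{i=1}^s (σ_{i-1} + σ_i)‖x_{i-1}^* - x_{i-1}‖,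 using ‖x_{i-1} - x_i^*‖ ≤ ‖x_{i-1} - x_{i-1}^*‖. -/
/-!
Multiplying the prox-center recursion by `σ (s + 1)` turns it into
`σ (s + 1) • x̄ (s + 1) = σ s • x̄ s + (σ (s + 1) - σ s) • x s`, so the increments of
`σ s • (x̄ s - x⋆ s)` are exactly the summands of the identity, which then telescopes from
`σ 0 = 0`. The bound is the triangle inequality applied to the identity, each summand being
controlled by `‖x⋆ i - x i‖` thanks to the monotone distance inequality.
-/

section ProxCenter

variable {E : Type*}

lemma smul_prox_center_succ [AddCommGroup E] [Module ℝ E] {a b : ℝ} (hb : b ≠ 0)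
    (u v : E) :
    b • ((1 - (1 - a / b)) • u + (1 - a / b) • v) = a • u + (b - a) • v := by
  rw [smul_add, smul_smul, smul_smul, sub_sub_cancel, mul_div_cancel₀ _ hb, mul_one_sub,
    mul_div_cancel₀ _ hb]

lemma smul_sub_eq_sum_range [AddCommGroup E] [Module ℝ E] {σ : ℕ → ℝ} (hσ0 : σ 0 = 0)
    {x xb xstar : ℕ → E}
    (hrec : ∀ s, σ (s + 1) • xb (s + 1) = σ s • xb s + (σ (s + 1) - σ s) • x s) (s : ℕ) :
    σ s • (xb s - xstar s) =
      ∑ i ∈ Finset.range s, (σ i • (xstar i - x i) + σ (i + 1) • (x i - xstar (i + 1))) := by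
  have hstep : ∀ i, σ (i + 1) • (xb (i + 1) - xstar (i + 1)) - σ i • (xb i - xstar i) =
      σ i • (xstar i - x i) + σ (i + 1) • (x i - xstar (i + 1)) := by
    intro i
    rw [smul_sub, hrec]
    simp only [smul_sub, sub_smul]
    abel
  simp_rw [← hstep]
  rw [Finset.sum_range_sub (fun i => σ i • (xb i - xstar i)), hσ0, zero_smul, sub_zero]

lemma norm_smul_add_smul_le [SeminormedAddCommGroup E] [NormedSpace ℝ E] {a b : ℝ}
    (ha : 0 ≤ a) (hb : 0 ≤ b) {u v : E} (huv : ‖v‖ ≤ ‖u‖) :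
    ‖a • u + b • v‖ ≤ (a + b) * ‖u‖ :=
  calc ‖a • u + b • v‖ ≤ a * ‖u‖ + b * ‖v‖ := by
        grw [norm_add_le, norm_smul, norm_smul, Real.norm_of_nonneg ha, Real.norm_of_nonneg hb]
    _ ≤ (a + b) * ‖u‖ := by rw [add_mul]; gcongr

end ProxCenter

theorem stmt_15_general {n : ℕ}
    (σ : ℕ → ℝ) (hσ0 : σ 0 = 0) (hσmono : ∀ s, σ s < σ (s + 1))
    (x xb xstar : ℕ → EuclideanSpace ℝ (Fin n))
    (hxb : ∀ s, 1 ≤ s → xb s = (1 - (1 - σ (s - 1) / σ s)) • xb (s - 1) +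
      (1 - σ (s - 1) / σ s) • x (s - 1))
    (hdist : ∀ i, 1 ≤ i → ‖x (i - 1) - xstar i‖ ≤ ‖x (i - 1) - xstar (i - 1)‖) :
    ∀ s, (σ s • (xb s - xstar s) =
        ∑ i ∈ Finset.range s,
          (σ i • (xstar i - x i) + σ (i + 1) • (x i - xstar (i + 1)))) ∧
      σ s * ‖xb s - xstar s‖ ≤
        ∑ i ∈ Finset.range s, (σ i + σ (i + 1)) * ‖xstar i - x i‖ := by
  have hσ_nonneg (s : ℕ) : 0 ≤ σ s :=
    hσ0 ▸ (strictMono_nat_of_lt_succ hσmono).monotone (Nat.zero_le s)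
  have hrec (s : ℕ) : σ (s + 1) • xb (s + 1) = σ s • xb s + (σ (s + 1) - σ s) • x s := by
    rw [hxb (s + 1) le_add_self, Nat.add_sub_cancel,
      smul_prox_center_succ ((hσ_nonneg s).trans_lt (hσmono s)).ne']
  have hid := smul_sub_eq_sum_range (xstar := xstar) hσ0 hrec
  refine fun s => ⟨hid s, ?_⟩
  calc σ s * ‖xb s - xstar s‖ = ‖σ s • (xb s - xstar s)‖ := by
        rw [norm_smul, Real.norm_of_nonneg (hσ_nonneg s)]
    _ ≤ ∑ i ∈ Finset.range s, ‖σ i • (xstar i - x i) + σ (i + 1) • (x i - xstar (i + 1))‖ := by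
        rw [hid s]; exact norm_sum_le _ _
    _ ≤ ∑ i ∈ Finset.range s, (σ i + σ (i + 1)) * ‖xstar i - x i‖ := by
        gcongr with i
        refine norm_smul_add_smul_le (hσ_nonneg i) (hσ_nonneg (i + 1)) ?_
        simpa [norm_sub_rev (xstar i)] using hdist (i + 1) le_add_self

theorem stmt_15 {n : ℕ} (f : EuclideanSpace ℝ (Fin n) → ℝ)
    (hf : ConvexOn ℝ Set.univ f) (hdiff : Differentiable ℝ f)
    (σ : ℕ → ℝ) (hσ0 : σ 0 = 0) (hσmono : ∀ s, σ s < σ (s + 1))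
    (x xb xstar : ℕ → EuclideanSpace ℝ (Fin n))
    (hxb0 : xb 0 = x 0)
    (hxb : ∀ s, 1 ≤ s → xb s = (1 - (1 - σ (s - 1) / σ s)) • xb (s - 1) +
      (1 - σ (s - 1) / σ s) • x (s - 1))
    (hstar : ∀ s y, f (xstar s) + σ s / 2 * ‖xstar s - xb s‖ ^ 2 ≤
      f y + σ s / 2 * ‖y - xb s‖ ^ 2)
    (hdist : ∀ i, 1 ≤ i → ‖x (i - 1) - xstar i‖ ≤ ‖x (i - 1) - xstar (i - 1)‖) :
    ∀ s, (σ s • (xb s - xstar s) =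
        ∑ i ∈ Finset.range s,
          (σ i • (xstar i - x i) + σ (i + 1) • (x i - xstar (i + 1)))) ∧
      σ s * ‖xb s - xstar s‖ ≤
        ∑ i ∈ Finset.range s, (σ i + σ (i + 1)) * ‖xstar i - x i‖ :=
  stmt_15_general σ hσ0 hσmono x xb xstar hxb hdist
end

section
/- In the setting of the projected-gradient-to-distance proposition: if x⁺⁺ is the perturbed gradient mapping with parameters η ≥ 2M, σ ≥ 0, prox-center x̄, and the M-descent inequality holds at x, then ‖x⁺⁺ - x‖ ≤ 2‖x*(σ;x̄) - x‖, where x*(σ;x̄) minimizes f + φ + (σ/2)‖· - x̄‖² over X. -/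
/-!
Test the optimality of x⁺⁺ at x* and that of x* at x⁺⁺, and add the two inequalities: the φ- and
σ-terms cancel. The remaining f-terms are bounded by the descent inequality at x⁺⁺ and by the
gradient inequality of the convex f at x*, which leaves (η - M)‖x⁺⁺ - x‖² ≤ η‖x* - x‖². Since
η ≥ 2M this gives ‖x⁺⁺ - x‖² ≤ 2‖x* - x‖².
-/

open scoped RealInnerProductSpace

theorem ConvexOn.apply_add_fderiv_le {E : Type*} [NormedAddCommGroup E] [NormedSpace ℝ E]
    {s : Set E} {f : E → ℝ} {f' : E →L[ℝ] ℝ} {x y : E} (hf : ConvexOn ℝ s f)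
    (hx : x ∈ s) (hy : y ∈ s) (hf' : HasFDerivAt f f' x) :
    f x + f' (y - x) ≤ f y := by
  let l : ℝ →ᵃ[ℝ] E := AffineMap.lineMap x y
  have hl0 : l 0 = x := AffineMap.lineMap_apply_zero x y
  have hl1 : l 1 = y := AffineMap.lineMap_apply_one x y
  have hderiv : HasDerivAt (f ∘ l) (f' (y - x)) 0 :=
    (hl0 ▸ hf').comp_hasDerivAt 0 AffineMap.hasDerivAt_lineMap
  have hslope := (hf.comp_affineMap l).le_slope_of_hasDerivAt
    (by simpa [hl0] using hx) (by simpa [hl1] using hy) one_pos hderiv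
  simp only [slope_def_field, Function.comp_apply, hl0, hl1] at hslope
  linarith

theorem ConvexOn.apply_add_inner_gradient_le {E : Type*} [NormedAddCommGroup E]
    [InnerProductSpace ℝ E] [CompleteSpace E] {s : Set E} {f : E → ℝ} {x y : E}
    (hf : ConvexOn ℝ s f) (hx : x ∈ s) (hy : y ∈ s) (hdiff : DifferentiableAt ℝ f x) :
    f x + ⟪gradient f x, y - x⟫ ≤ f y := by
  simpa using hf.apply_add_fderiv_le hx hy hdiff.hasGradientAt.hasFDerivAt

theorem stmt_17_general {n : ℕ} (X : Set (EuclideanSpace ℝ (Fin n)))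
    (f φ : EuclideanSpace ℝ (Fin n) → ℝ)
    (hf : ConvexOn ℝ Set.univ f) (hdiff : Differentiable ℝ f)
    (σ M η : ℝ) (hM : 0 < M) (hη : η ≥ 2 * M)
    (x xb xpp xstar : EuclideanSpace ℝ (Fin n))
    (hxpp : xpp ∈ X ∧ ∀ u ∈ X,
      ⟪gradient f x, xpp⟫ + φ xpp + σ / 2 * ‖xpp - xb‖ ^ 2 + η / 2 * ‖xpp - x‖ ^ 2 ≤
      ⟪gradient f x, u⟫ + φ u + σ / 2 * ‖u - xb‖ ^ 2 + η / 2 * ‖u - x‖ ^ 2)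
    (hdesc : f xpp - f x - ⟪gradient f x, xpp - x⟫ ≤ M / 2 * ‖xpp - x‖ ^ 2)
    (hxstar : xstar ∈ X ∧ ∀ u ∈ X,
      f xstar + φ xstar + σ / 2 * ‖xstar - xb‖ ^ 2 ≤
      f u + φ u + σ / 2 * ‖u - xb‖ ^ 2) :
    ‖xpp - x‖ ≤ 2 * ‖xstar - x‖ := by
  obtain ⟨hxppX, hxpp_min⟩ := hxpp
  obtain ⟨hxstarX, hxstar_min⟩ := hxstar
  have hlin := hf.apply_add_inner_gradient_le (Set.mem_univ x) (Set.mem_univ xstar) (hdiff x)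
  simp only [inner_sub_right] at hlin hdesc
  have hsq : (η - M) * ‖xpp - x‖ ^ 2 ≤ η * ‖xstar - x‖ ^ 2 := by
    linarith [hxpp_min xstar hxstarX, hxstar_min xpp hxppX]
  have hsq_two : ‖xpp - x‖ ^ 2 ≤ (2 * ‖xstar - x‖) ^ 2 := by
    nlinarith [sq_nonneg ‖xpp - x‖, sq_nonneg ‖xstar - x‖]
  exact le_of_sq_le_sq hsq_two (by positivity)

theorem stmt_17 {n : ℕ} (X : Set (EuclideanSpace ℝ (Fin n)))
    (hXne : X.Nonempty) (hXclosed : IsClosed X) (hXconv : Convex ℝ X)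
    (f φ : EuclideanSpace ℝ (Fin n) → ℝ)
    (hf : ConvexOn ℝ Set.univ f) (hdiff : Differentiable ℝ f)
    (hφ : ConvexOn ℝ Set.univ φ)
    (σ M η : ℝ) (hσ : 0 ≤ σ) (hM : 0 < M) (hη : η ≥ 2 * M)
    (x xb xpp xstar : EuclideanSpace ℝ (Fin n))
    (hxpp : xpp ∈ X ∧ ∀ u ∈ X,
      ⟪gradient f x, xpp⟫ + φ xpp + σ / 2 * ‖xpp - xb‖ ^ 2 + η / 2 * ‖xpp - x‖ ^ 2 ≤
      ⟪gradient f x, u⟫ + φ u + σ / 2 * ‖u - xb‖ ^ 2 + η / 2 * ‖u - x‖ ^ 2)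
    (hdesc : f xpp - f x - ⟪gradient f x, xpp - x⟫ ≤ M / 2 * ‖xpp - x‖ ^ 2)
    (hxstar : xstar ∈ X ∧ ∀ u ∈ X,
      f xstar + φ xstar + σ / 2 * ‖xstar - xb‖ ^ 2 ≤
      f u + φ u + σ / 2 * ‖u - xb‖ ^ 2) :
    ‖xpp - x‖ ≤ 2 * ‖xstar - x‖ :=
  stmt_17_general X f φ hf hdiff σ M η hM hη x xb xpp xstar hxpp hdesc hxstar
end
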